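/- Let n ≥ 1 and m ≥ 1 be integers, and let p, q be positive coprime integers with n + 1/m ≤ p/q < n + 1/(m−1) (with the convention 1/0 = +∞). Let r_β = 1 + (mn+1)/(mn+1−m) and r_α = 1 + p/(p−q). Then the negative continued fraction expansion (with all entries ≥ 2, produced by a₀ = ⌈r⌉ and recursion) of r_β is an initial segment of the negative continued fraction expansion of r_α. -/

import Mathlib

/-- The negative continued fraction `[a₀, a₁, …, a_ℓ] = a₀ - 1/(a₁ - 1/(⋯ - 1/a_ℓ))`. -/
def ncf : List ℚ → ℚ
  | [] => 0
  | [a] => a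
  | a :: b :: rest => a - 1 / ncf (b :: rest)

/-!
The numbers whose expansion begins with a list `L` of integers `≥ 2` form the half-open interval
`(ncf (L ++ [1]), ncf L]`: the first entry of an expansion is the ceiling of its value, and
`x ↦ a - 1/x` carries the interval of the tail onto the interval of the whole list. So it suffices to write down the expansion of `r_β`, namely `[3, 2, …, 2, m + 1]` (`n - 2` twos;
`[m + 2]` when `n = 1`), and to check that `r_α` lies in its interval. With `y = p/q` one has
`r_α = 1 + y / (y - 1)`, the endpoints of the interval are the values of this decreasing function at
`y = n + 1/(m - 1)` and `y = n + 1/m`, and the hypotheses on `p/q` say exactly that.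
-/

open List

section Rational

variable {l : List ℚ}

@[simp] lemma ncf_nil : ncf [] = 0 := rfl

@[simp] lemma ncf_singleton (a : ℚ) : ncf [a] = a := rfl

lemma ncf_cons (a : ℚ) (hl : l ≠ []) : ncf (a :: l) = a - 1 / ncf l := by
  cases l with
  | nil => contradiction
  | cons b t => rfl

lemma one_lt_ncf (hl : l ≠ []) (h2 : ∀ x ∈ l, 2 ≤ x) : 1 < ncf l := by
  induction l with
  | nil => contradiction
  | cons a t ih =>
    have ha : 2 ≤ a := h2 a mem_cons_self
    rcases eq_or_ne t [] with rfl | ht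
    · simp only [ncf_singleton]
      linarith
    · have ht1 : 1 < ncf t := ih ht fun x hx => h2 x (mem_cons_of_mem a hx)
      have : 1 / ncf t < 1 := (div_lt_one (by linarith)).2 ht1
      rw [ncf_cons a ht]
      linarith

lemma ncf_cons_lt (a : ℚ) (hl : l ≠ []) (h2 : ∀ x ∈ l, 2 ≤ x) : ncf (a :: l) < a := by
  have : 0 < 1 / ncf l := one_div_pos.2 (by linarith [one_lt_ncf hl h2])
  rw [ncf_cons a hl]
  linarith

lemma ncf_cons_le (a : ℚ) (h2 : ∀ x ∈ l, 2 ≤ x) : ncf (a :: l) ≤ a := by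
  rcases eq_or_ne l [] with rfl | hl
  · simp
  · exact (ncf_cons_lt a hl h2).le

lemma sub_one_lt_ncf_cons (a : ℚ) (h2 : ∀ x ∈ l, 2 ≤ x) : a - 1 < ncf (a :: l) := by
  rcases eq_or_ne l [] with rfl | hl
  · simp
  · have : 1 / ncf l < 1 := (div_lt_one (by linarith [one_lt_ncf hl h2])).2 (one_lt_ncf hl h2)
    rw [ncf_cons a hl]
    linarith

lemma one_le_ncf_append_one (h2 : ∀ x ∈ l, 2 ≤ x) : 1 ≤ ncf (l ++ [1]) := by
  induction l with
  | nil => simp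
  | cons a t ih =>
    have ih' := ih fun x hx => h2 x (mem_cons_of_mem a hx)
    have : 1 / ncf (t ++ [1]) ≤ 1 := (div_le_one (by linarith)).2 ih'
    rw [cons_append, ncf_cons a (by simp)]
    linarith [h2 a mem_cons_self]

lemma sub_one_le_ncf_cons_append_one (a : ℚ) (h2 : ∀ x ∈ l, 2 ≤ x) :
    a - 1 ≤ ncf (a :: (l ++ [1])) := by
  have h1 := one_le_ncf_append_one h2
  have : 1 / ncf (l ++ [1]) ≤ 1 := (div_le_one (by linarith)).2 h1
  rw [ncf_cons a (by simp)]
  linarith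

lemma ncf_append_one_lt (hl : l ≠ []) (h2 : ∀ x ∈ l, 2 ≤ x) : ncf (l ++ [1]) < ncf l := by
  induction l with
  | nil => contradiction
  | cons a t ih =>
    rcases eq_or_ne t [] with rfl | ht
    · simp [ncf]
    · have ht2 : ∀ x ∈ t, 2 ≤ x := fun x hx => h2 x (mem_cons_of_mem a hx)
      have hlow := one_le_ncf_append_one ht2
      have := ih ht ht2
      have : 0 < ncf (t ++ [1]) := by linarith
      rw [cons_append, ncf_cons a (by simp), ncf_cons a ht]
      gcongr

lemma ncf_cons_lt_ncf_cons_iff (a : ℚ) {l' : List ℚ} (hl : l ≠ []) (hl' : l' ≠ [])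
    (h : 0 < ncf l) (h' : 0 < ncf l') : ncf (a :: l) < ncf (a :: l') ↔ ncf l < ncf l' := by
  rw [ncf_cons a hl, ncf_cons a hl', sub_lt_sub_iff_left, one_div_lt_one_div h' h]

lemma ncf_cons_le_ncf_cons_iff (a : ℚ) {l' : List ℚ} (hl : l ≠ []) (hl' : l' ≠ [])
    (h : 0 < ncf l) (h' : 0 < ncf l') : ncf (a :: l) ≤ ncf (a :: l') ↔ ncf l ≤ ncf l' := by
  rw [ncf_cons a hl, ncf_cons a hl', sub_le_sub_iff_left, one_div_le_one_div h' h]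

lemma ncf_append_pair_one (l : List ℚ) (c : ℚ) : ncf (l ++ [c, 1]) = ncf (l ++ [c - 1]) := by
  induction l with
  | nil => simp [ncf]
  | cons a t ih => rw [cons_append, cons_append, ncf_cons a (by simp), ncf_cons a (by simp), ih]

lemma ncf_replicate_two_append_add_one (k : ℕ) {c : ℚ} (hc : 0 ≤ c) :
    ncf (replicate k 2 ++ [c + 1]) = ((k + 1) * c + 1) / (k * c + 1) := by
  induction k with
  | zero => simp
  | succ k ih =>
    rw [replicate_succ, cons_append, ncf_cons 2 (by simp), ih]
    have : 0 < (k + 1) * c + 1 := by positivity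
    field_simp
    push_cast
    ring

end Rational

lemma two_le_of_mem_map_intCast {L : List ℤ} (h : ∀ x ∈ L, 2 ≤ x) :
    ∀ x ∈ L.map (Int.cast : ℤ → ℚ), 2 ≤ x := by
  simp only [mem_map, forall_exists_index, and_imp, forall_apply_eq_imp_iff₂]
  exact fun x hx => by exact_mod_cast h x hx

lemma ceil_ncf_cons (a : ℤ) {l : List ℚ} (h2 : ∀ x ∈ l, 2 ≤ x) : ⌈ncf (a :: l)⌉ = a :=
  Int.ceil_eq_iff.2 ⟨sub_one_lt_ncf_cons _ h2, ncf_cons_le _ h2⟩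

theorem isPrefix_of_ncf_mem_Ioc {L l : List ℤ} (hL : ∀ x ∈ L, 2 ≤ x) (hl : ∀ x ∈ l, 2 ≤ x)
    (h : ncf (l.map Int.cast) ∈ Set.Ioc (ncf (L.map Int.cast ++ [1])) (ncf (L.map Int.cast))) :
    L <+: l := by
  induction L generalizing l with
  | nil => exact nil_prefix
  | cons a t ih =>
    have ht : ∀ x ∈ t, 2 ≤ x := fun x hx => hL x (mem_cons_of_mem a hx)
    have ht' := two_le_of_mem_map_intCast ht
    obtain ⟨hlo, hhi⟩ := h
    simp only [map_cons, cons_append] at hlo hhi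
    have hlow := sub_one_le_ncf_cons_append_one (a : ℚ) ht'
    cases l with
    | nil =>
      have ha : (2 : ℚ) ≤ a := by exact_mod_cast hL a mem_cons_self
      simp only [map_nil, ncf_nil] at hlo
      linarith
    | cons c s =>
      have hs : ∀ x ∈ s, 2 ≤ x := fun x hx => hl x (mem_cons_of_mem c hx)
      have hs' := two_le_of_mem_map_intCast hs
      simp only [map_cons] at hlo hhi
      obtain rfl : c = a := (ceil_ncf_cons c hs').symm.trans
        (Int.ceil_eq_iff.2 ⟨hlow.trans_lt hlo, hhi.trans (ncf_cons_le _ ht')⟩)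
      refine (prefix_cons_inj c).2 ?_
      rcases eq_or_ne t [] with rfl | htne
      · exact nil_prefix
      have htne' : t.map (Int.cast : ℤ → ℚ) ≠ [] := by simpa using htne
      have hsne : s.map (Int.cast : ℤ → ℚ) ≠ [] := by
        rintro hs0
        rw [hs0, ncf_singleton] at hhi
        linarith [ncf_cons_lt (c : ℚ) htne' ht']
      have hs0 : 0 < ncf (s.map Int.cast) := by linarith [one_lt_ncf hsne hs']
      have ht0 : 0 < ncf (t.map Int.cast) := by linarith [one_lt_ncf htne' ht']
      have ht10 : 0 < ncf (t.map Int.cast ++ [1]) := by linarith [one_le_ncf_append_one ht']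
      exact ih ht hs ⟨(ncf_cons_lt_ncf_cons_iff _ (by simp) hsne ht10 hs0).1 hlo,
        (ncf_cons_le_ncf_cons_iff _ hsne htne' hs0 ht0).1 hhi⟩

theorem eq_of_ncf_eq {l l' : List ℤ} (hl : l ≠ []) (h2 : ∀ x ∈ l, 2 ≤ x) (h2' : ∀ x ∈ l', 2 ≤ x)
    (h : ncf (l.map Int.cast) = ncf (l'.map Int.cast)) : l = l' := by
  have hl' : l' ≠ [] := by
    rintro rfl
    have := one_lt_ncf (by simpa using hl) (two_le_of_mem_map_intCast h2)
    simp only [map_nil, ncf_nil] at h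
    linarith
  have hll' : l <+: l' := isPrefix_of_ncf_mem_Ioc h2 h2'
    ⟨h ▸ ncf_append_one_lt (by simpa using hl) (two_le_of_mem_map_intCast h2), h.ge⟩
  have hl'l : l' <+: l := isPrefix_of_ncf_mem_Ioc h2' h2
    ⟨h ▸ ncf_append_one_lt (by simpa using hl') (two_le_of_mem_map_intCast h2'), h.le⟩
  exact hll'.eq_of_length (hll'.length_le.antisymm hl'l.length_le)

lemma exists_ncf_eq_one_add_ncf_replicate_two (k : ℕ) {c : ℤ} (hc : 1 ≤ c) :
    ∃ L : List ℤ, (∀ x ∈ L, 2 ≤ x) ∧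
      ncf (L.map Int.cast) = 1 + ncf (replicate k 2 ++ [(c : ℚ) + 1]) ∧
      ncf (L.map Int.cast ++ [1]) = 1 + ncf (replicate k 2 ++ [(c : ℚ)]) := by
  cases k with
  | zero =>
    refine ⟨[c + 2], by simp only [mem_singleton, forall_eq]; omega, ?_, ?_⟩ <;>
    · simp [ncf]
      ring
  | succ k =>
    refine ⟨3 :: (replicate k 2 ++ [c + 1]), ?_, ?_, ?_⟩
    · intro x hx
      simp only [mem_cons, mem_append, mem_replicate, not_mem_nil, or_false] at hx
      omega
    · simp only [map_cons, map_append, map_replicate, map_nil, replicate_succ, cons_append]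
      rw [ncf_cons _ (by simp), ncf_cons _ (by simp)]
      push_cast
      ring
    · simp only [map_cons, map_append, map_replicate, map_nil, replicate_succ, cons_append,
        append_assoc, nil_append]
      rw [ncf_cons _ (by simp), ncf_cons _ (by simp)]
      push_cast
      rw [ncf_append_pair_one, add_sub_cancel_right]
      ring

lemma div_sub_one_mem_Ioc {n m y : ℚ} (hn : 1 ≤ n) (hm : 1 ≤ m) (hlow : n + 1 / m ≤ y)
    (hhigh : m = 1 ∨ y < n + 1 / (m - 1)) :
    y / (y - 1) ∈
      Set.Ioc ((n * (m - 1) + 1) / ((n - 1) * (m - 1) + 1)) ((n * m + 1) / ((n - 1) * m + 1)) := by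
  have hlow' : n * m + 1 ≤ y * m := by
    rw [← div_le_iff₀ (by linarith), add_div, mul_div_cancel_right₀ _ (by positivity)]
    exact hlow
  have hhigh' : y * (m - 1) < n * (m - 1) + 1 := by
    rcases eq_or_lt_of_le hm with rfl | hm1
    · simp
    · have hm0 : 0 < m - 1 := by linarith
      rw [← lt_div_iff₀ hm0, add_div, mul_div_cancel_right₀ _ hm0.ne']
      exact hhigh.resolve_left hm1.ne'
  have hy : 0 < y - 1 := by nlinarith
  have hd1 : 0 < (n - 1) * (m - 1) + 1 := by nlinarith
  have hd2 : 0 < (n - 1) * m + 1 := by nlinarith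
  constructor
  · rw [div_lt_div_iff₀ hd1 hy]
    nlinarith
  · rw [div_le_div_iff₀ hy hd2]
    nlinarith

theorem ncf_initial_segment_general (n m p q : ℤ) (hn : 1 ≤ n) (hm : 1 ≤ m)
    (hq : 0 < q)
    (hlow : (n : ℚ) + 1 / (m : ℚ) ≤ (p : ℚ) / (q : ℚ))
    (hhigh : m = 1 ∨ (p : ℚ) / (q : ℚ) < (n : ℚ) + 1 / ((m : ℚ) - 1)) :
    ∀ lβ lα : List ℤ, lβ ≠ [] → lα ≠ [] →
      (∀ a ∈ lβ, 2 ≤ a) → (∀ a ∈ lα, 2 ≤ a) →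
      ncf (lβ.map (fun a => (a : ℚ)))
        = 1 + ((m : ℚ) * n + 1) / ((m : ℚ) * n + 1 - m) →
      ncf (lα.map (fun a => (a : ℚ)))
        = 1 + (p : ℚ) / ((p : ℚ) - q) →
      lβ <+: lα := by
  intro lβ lα hβ _ hβ2 hα2 hβval hαval
  -- `(a : ℚ)` is elaborated by coercing the whole list `List ℤ → List ℚ` through its monad structure
  have hcast (l : List ℤ) : l.map (fun a => (a : ℚ)) = l.map Int.cast :=
    (map_id _).trans (bind_pure_comp _ _)
  rw [hcast] at hβval hαval
  obtain ⟨k, rfl⟩ : ∃ k : ℕ, n = k + 1 := ⟨(n - 1).toNat, by omega⟩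
  obtain ⟨L, hL2, hLval, hLlow⟩ := exists_ncf_eq_one_add_ncf_replicate_two k hm
  have hm' : (1 : ℚ) ≤ m := by exact_mod_cast hm
  rw [ncf_replicate_two_append_add_one k (by linarith)] at hLval
  rw [← sub_add_cancel (m : ℚ) 1, ncf_replicate_two_append_add_one k (by linarith)] at hLlow
  push_cast at hβval hlow hhigh
  have hy := div_sub_one_mem_Ioc (le_add_of_nonneg_left k.cast_nonneg) hm' hlow
    (hhigh.imp_left (by rintro rfl; simp))
  simp only [add_sub_cancel_right] at hy
  have hα : ncf (lα.map Int.cast) = 1 + p / q / (p / q - 1) := by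
    rw [hαval]
    field_simp
  obtain rfl : lβ = L := eq_of_ncf_eq hβ hβ2 hL2 (by rw [hβval, hLval]; ring)
  refine isPrefix_of_ncf_mem_Ioc hβ2 hα2 ⟨?_, ?_⟩
  · rw [hLlow, hα]
    linarith [hy.1]
  · rw [hLval, hα]
    linarith [hy.2]

theorem ncf_initial_segment (n m p q : ℤ) (hn : 1 ≤ n) (hm : 1 ≤ m)
    (hp : 0 < p) (hq : 0 < q) (hcop : IsCoprime p q)
    (hlow : (n : ℚ) + 1 / (m : ℚ) ≤ (p : ℚ) / (q : ℚ))
    (hhigh : m = 1 ∨ (p : ℚ) / (q : ℚ) < (n : ℚ) + 1 / ((m : ℚ) - 1)) :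
    ∀ lβ lα : List ℤ, lβ ≠ [] → lα ≠ [] →
      (∀ a ∈ lβ, 2 ≤ a) → (∀ a ∈ lα, 2 ≤ a) →
      ncf (lβ.map (fun a => (a : ℚ)))
        = 1 + ((m : ℚ) * n + 1) / ((m : ℚ) * n + 1 - m) →
      ncf (lα.map (fun a => (a : ℚ)))
        = 1 + (p : ℚ) / ((p : ℚ) - q) →
      lβ <+: lα :=
  ncf_initial_segment_general n m p q hn hm hq hlow hhigh
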